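/- Let C be a shortest even hole of a graph G, let u and v be distinct vertices of C, let the uv-path P of G be a C-shallow worst C-shortcut, and let C1, C2 be the uv-paths of C with ‖C1‖ ≤ ‖C2‖. Then every shortest uv-path P_uv of G satisfies ‖P_uv‖ = ‖P‖ and G[P_uv ∪ C2] is a hole of G. -/

import Mathlib

open SimpleGraph

variable {V : Type*}

/-- The vertex set of a walk. -/
def suppSet {G : SimpleGraph V} {u v : V} (w : G.Walk u v) : Set V :=
  {x | x ∈ w.support}

/-- An induced cycle of `G`. -/
def IsInducedCycle (G : SimpleGraph V) {r : V} (w : G.Walk r r) : Prop :=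
  w.IsCycle ∧ ∀ a b : V, a ∈ w.support → b ∈ w.support → G.Adj a b → s(a, b) ∈ w.edges

/-- A hole of `G`: an induced cycle with at least 4 vertices. -/
def IsHole (G : SimpleGraph V) {r : V} (w : G.Walk r r) : Prop :=
  IsInducedCycle G w ∧ 4 ≤ w.length

/-- An even hole of `G`. -/
def IsEvenHole (G : SimpleGraph V) {r : V} (w : G.Walk r r) : Prop :=
  IsHole G w ∧ Even w.length

/-- A shortest even hole of `G`. -/
def IsShortestEvenHole (G : SimpleGraph V) {r : V} (w : G.Walk r r) : Prop :=
  IsEvenHole G w ∧ ∀ (y : V) (w' : G.Walk y y), IsEvenHole G w' → w.length ≤ w'.length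

/-- `P` is a path of `G` all of whose edges lie on the walk `c`
(used for "a `uv`-path of `C`"). -/
def IsPathOf (G : SimpleGraph V) {p q u v : V} (c : G.Walk p q) (P : G.Walk u v) : Prop :=
  P.IsPath ∧ ∀ e ∈ P.edges, e ∈ c.edges

/-- The distance `d_C(u,v)` between `u` and `v` within the cycle `c`. -/
noncomputable def cycleDist (G : SimpleGraph V) {r : V} (c : G.Walk r r) (u v : V) : ℕ :=
  sInf {n | ∃ P : G.Walk u v, IsPathOf G c P ∧ P.length = n}

/-- The induced subgraph `G[S]` is a hole of `G`. -/
def IsHoleOn (G : SimpleGraph V) (S : Set V) : Prop :=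
  ∃ (r : V) (w : G.Walk r r), IsHole G w ∧ suppSet w = S

/-- The induced subgraph `G[S]` is an even hole of `G`. -/
def IsEvenHoleOn (G : SimpleGraph V) (S : Set V) : Prop :=
  ∃ (r : V) (w : G.Walk r r), IsEvenHole G w ∧ suppSet w = S

/-- The induced subgraph `G[S]` is a shortest even hole of `G`. -/
def IsShortestEvenHoleOn (G : SimpleGraph V) (S : Set V) : Prop :=
  ∃ (r : V) (w : G.Walk r r), IsShortestEvenHole G w ∧ suppSet w = S

/-- `P` is `C`-good: the union of `P` and one of the two `uv`-paths of `C`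
is again a shortest even hole of `G`. -/
def CGood (G : SimpleGraph V) {r u v : V} (c : G.Walk r r) (P : G.Walk u v) : Prop :=
  ∃ Q : G.Walk u v, IsPathOf G c Q ∧ IsShortestEvenHoleOn G (suppSet P ∪ suppSet Q)

/-- The standing assumptions for `C`-shortcuts: `P` is a `uv`-path of `G` for distinct
nonadjacent vertices `u`, `v` of `C`. -/
def ShortcutSetup (G : SimpleGraph V) {r u v : V} (c : G.Walk r r) (P : G.Walk u v) : Prop :=
  P.IsPath ∧ u ≠ v ∧ ¬G.Adj u v ∧ u ∈ c.support ∧ v ∈ c.support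

/-- `P` is a `C`-shortcut: `2 ≤ ‖P‖ ≤ d_C(u,v)` and `‖P‖ < ‖C‖/4`. -/
def CShortcut (G : SimpleGraph V) {r u v : V} (c : G.Walk r r) (P : G.Walk u v) : Prop :=
  2 ≤ P.length ∧ P.length ≤ cycleDist G c u v ∧ 4 * P.length < c.length

/-- `C1` and `C2` are the two `uv`-paths of the cycle `c`. -/
def ArcPair (G : SimpleGraph V) {r u v : V} (c : G.Walk r r) (C1 C2 : G.Walk u v) : Prop :=
  IsPathOf G c C1 ∧ IsPathOf G c C2 ∧ C1.length + C2.length = c.length ∧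
    ∀ e ∈ c.edges, e ∈ C1.edges ∨ e ∈ C2.edges

/-- `P` is `C`-shallow: `‖P‖ ≥ d_C(u,v) − 1` and `G[P ∪ C2]` is a hole, where `C2` is the
longer of the two `uv`-paths of `C`. -/
def CShallow (G : SimpleGraph V) {r u v : V} (c : G.Walk r r) (P : G.Walk u v) : Prop :=
  cycleDist G c u v - 1 ≤ P.length ∧
    ∀ C1 C2 : G.Walk u v, ArcPair G c C1 C2 → C1.length ≤ C2.length →
      IsHoleOn G (suppSet P ∪ suppSet C2)

/-- `P` is a worst `C`-shortcut. -/
def WorstCShortcut (G : SimpleGraph V) {r u v : V} (c : G.Walk r r) (P : G.Walk u v) : Prop :=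
  ShortcutSetup G c P ∧ CShortcut G c P ∧ ¬CGood G c P ∧
    ∀ (u' v' : V) (P' : G.Walk u' v'),
      ShortcutSetup G c P' → CShortcut G c P' → ¬CGood G c P' →
        (P.length < P'.length ∨
          (P.length = P'.length ∧ cycleDist G c u' v' ≤ cycleDist G c u v))

/-- `C` is good in `G`: every `C`-shortcut is `C`-good. -/
def GoodHole (G : SimpleGraph V) {r : V} (c : G.Walk r r) : Prop :=
  ∀ (u v : V) (P : G.Walk u v), ShortcutSetup G c P → CShortcut G c P → CGood G c P

/-- `P` is a shortest `uv`-path of `G`. -/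
def IsShortestPath (G : SimpleGraph V) {u v : V} (P : G.Walk u v) : Prop :=
  P.IsPath ∧ ∀ Q : G.Walk u v, P.length ≤ Q.length

/-- The closed neighborhood `N_G[S]` of a vertex set `S`. -/
def closedNbhd (G : SimpleGraph V) (S : Set V) : Set V :=
  S ∪ {x | ∃ y ∈ S, G.Adj y x}

/-- The subgraph of `G` induced on `S` (kept on the same vertex type: edges of `G`
with both ends in `S`). -/
def restrictTo (G : SimpleGraph V) (S : Set V) : SimpleGraph V where
  Adj a b := G.Adj a b ∧ a ∈ S ∧ b ∈ S
  symm := ⟨fun a b h => ⟨h.1.symm, h.2.2, h.2.1⟩⟩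
  loopless := ⟨fun a h => G.irrefl h.1⟩

/-- The vertex set of `H(u,v,x,y) = G[(V(G) \ N_G[V(P_uv ∪ P_xy) \ {u,v}]) ∪ {u,v}]`. -/
def Hverts (G : SimpleGraph V) {u v a b : V} (Puv : G.Walk u v) (Pxy : G.Walk a b) : Set V :=
  (Set.univ \ closedNbhd G ((suppSet Puv ∪ suppSet Pxy) \ {u, v})) ∪ {u, v}

/-- The graph `H(u,v,x,y)`. -/
def Hgraph (G : SimpleGraph V) {u v a b : V} (Puv : G.Walk u v) (Pxy : G.Walk a b) :
    SimpleGraph V :=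
  restrictTo G (Hverts G Puv Pxy)

/-- `G` is shallow. -/
def ShallowGraph (G : SimpleGraph V) : Prop :=
  ∃ (r : V) (c : G.Walk r r), IsShortestEvenHole G c ∧
    ∀ (u v : V) (P : G.Walk u v), WorstCShortcut G c P → CShallow G c P

/-- `G` is anti-shallow. -/
def AntiShallowGraph (G : SimpleGraph V) : Prop :=
  ∀ (r : V) (c : G.Walk r r), IsShortestEvenHole G c → ¬GoodHole G c →
    ∀ (u v : V) (P : G.Walk u v), WorstCShortcut G c P → ¬CShallow G c P

/-- The induced subgraph `G[S]` is a path with end-vertices `u` and `v`. -/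
def IsInducedPathOn (G : SimpleGraph V) (u v : V) (S : Set V) : Prop :=
  ∃ Q : G.Walk u v, Q.IsPath ∧ suppSet Q = S ∧
    ∀ a b : V, a ∈ S → b ∈ S → G.Adj a b → s(a, b) ∈ Q.edges

/-!
Two paths of `C` with the same ends have equal or complementary edge sets: at every vertex of `C`
their degrees have the same parity, and there they only count the two edges of `C` at that vertex.
So their lengths are equal or add up to `‖C‖`.

Let `k = ‖P‖`. Suppose `x ≠ y` on `C` are joined by a path `A` of `C` with `‖A‖ + k < ‖C‖` and
`d(x, y) ≤ k`. Unless `d(x, y) = ‖A‖`, a shortest `xy`-path is a `C`-shortcut. If it is good, it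
forms a shortest even hole with a path of `C`, whose length `‖A‖` or `‖C‖ - ‖A‖` must then be at
least `‖C‖ - d(x, y)`, and this forces `d(x, y) = ‖A‖`. If it is bad, `P` being worst gives
`d(x, y) = k` and `d_C(x, y) ≤ d_C(u, v)`. For `x = u`, `y = v` this gives `d(u, v) = k`, since `P`
is shallow. If an inner vertex of a shortest `uv`-path were equal or adjacent to an inner vertex
`y` of `C2`, then `d(u, y) + d(v, y) ≤ k + 2`, and the dichotomy applied to the two subpaths of `C2`
at `y` contradicts `‖C2‖ ≥ 3k`. Hence the shortest path and `C2`, both chordless, glue to a hole.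
-/

lemma List.countP_eq_count_add_count {α : Type*} [DecidableEq α] {p : α → Bool} {a b : α}
    (hab : a ≠ b) (ha : p a) (hb : p b) :
    ∀ {l : List α}, (∀ x ∈ l, p x → x = a ∨ x = b) → l.countP p = l.count a + l.count b
  | [], _ => rfl
  | x :: l, h => by
    have ih := List.countP_eq_count_add_count hab ha hb fun y hy => h y (List.mem_cons_of_mem x hy)
    have hx := h x List.mem_cons_self
    by_cases hpx : p x
    · rcases hx hpx with rfl | rfl <;> simp [hpx, ih, hab, hab.symm] <;> omega
    · have hxa : x ≠ a := by rintro rfl; exact hpx ha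
      have hxb : x ≠ b := by rintro rfl; exact hpx hb
      simp [hpx, ih, hxa, hxb]

namespace SimpleGraph.Walk

variable {G : SimpleGraph V}

lemma IsCycle.exists_edges_at {r z : V} {c : G.Walk r r} (hc : c.IsCycle) (hz : z ∈ c.support) :
    ∃ e e', e ≠ e' ∧ ∀ f, f ∈ c.edges ∧ z ∈ f ↔ f = e ∨ f = e' := by
  obtain ⟨a, a', hne, hN⟩ := Set.ncard_eq_two.mp (hc.ncard_neighborSet_toSubgraph_eq_two hz)
  have hmem : ∀ b, s(z, b) ∈ c.edges ↔ b = a ∨ b = a' := fun b => by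
    rw [← adj_toSubgraph_iff_mem_edges, ← Subgraph.mem_neighborSet, hN]; simp
  refine ⟨s(z, a), s(z, a'), fun h => hne (Sym2.congr_right.mp h), fun f => ⟨?_, ?_⟩⟩
  · rintro ⟨hf, hzf⟩
    obtain ⟨b, rfl⟩ := Sym2.mem_iff_exists.mp hzf
    rcases (hmem b).mp hf with rfl | rfl <;> simp
  · rintro (rfl | rfl) <;> simp [hmem]

lemma IsTrail.countP_mem_edges_eq [DecidableEq V] {a b x y z : V} {c : G.Walk a b}
    {e e' : Sym2 V} (hne : e ≠ e') (hce : ∀ f, f ∈ c.edges ∧ z ∈ f ↔ f = e ∨ f = e')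
    {T : G.Walk x y} (hT : T.IsTrail) (hTc : T.edges ⊆ c.edges) :
    T.edges.countP (fun f => z ∈ f) =
      (if e ∈ T.edges then 1 else 0) + (if e' ∈ T.edges then 1 else 0) := by
  rw [List.countP_eq_count_add_count hne (by simpa using ((hce e).2 (.inl rfl)).2)
    (by simpa using ((hce e').2 (.inr rfl)).2)
    fun f hf hzf => (hce f).1 ⟨hTc hf, by simpa using hzf⟩,
    hT.edges_nodup.count, hT.edges_nodup.count]

lemma IsCycle.mem_edges_of_mem_support {r x y z : V} {c : G.Walk r r} (hc : c.IsCycle)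
    {T : G.Walk x y} (hT : T.IsTrail) (hTc : T.edges ⊆ c.edges) (hz : z ∈ T.support)
    (hzx : z ≠ x) (hzy : z ≠ y) {f : Sym2 V} (hf : f ∈ c.edges) (hzf : z ∈ f) : f ∈ T.edges := by
  classical
  obtain ⟨e, e', hne, hce⟩ := hc.exists_edges_at (mem_support_of_mem_edges hf hzf)
  have heven := (hT.even_countP_edges_iff z).2 fun _ => ⟨hzx, hzy⟩
  rw [hT.countP_mem_edges_eq hne hce hTc] at heven
  obtain ⟨g, hg, hzg⟩ := (mem_support_iff_exists_mem_edges.1 hz).resolve_left hzy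
  rcases (hce g).1 ⟨hTc hg, hzg⟩ with rfl | rfl <;> rcases (hce f).1 ⟨hf, hzf⟩ with rfl | rfl <;>
    split_ifs at heven <;> simp_all (decide := true)

lemma IsCycle.mem_edges_iff_or {r x y : V} {c : G.Walk r r} (hc : c.IsCycle) {Q R : G.Walk x y}
    (hQ : Q.IsTrail) (hR : R.IsTrail) (hQc : Q.edges ⊆ c.edges) (hRc : R.edges ⊆ c.edges) :
    (∀ f ∈ c.edges, f ∈ Q.edges ↔ f ∈ R.edges) ∨ (∀ f ∈ c.edges, f ∈ Q.edges ↔ f ∉ R.edges) := by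
  classical
  let χ : Sym2 V → Bool := fun f => decide (f ∈ Q.edges ↔ f ∈ R.edges)
  have hlocal : ∀ z f f', f ∈ c.edges → f' ∈ c.edges → z ∈ f → z ∈ f' → χ f = χ f' := by
    intro z f f' hf hf' hzf hzf'
    obtain ⟨e, e', hne, hce⟩ := hc.exists_edges_at (mem_support_of_mem_edges hf hzf)
    have hpar := (hQ.even_countP_edges_iff z).trans (hR.even_countP_edges_iff z).symm
    rw [hQ.countP_mem_edges_eq hne hce hQc, hR.countP_mem_edges_eq hne hce hRc] at hpar
    rcases (hce f).1 ⟨hf, hzf⟩ with rfl | rfl <;> rcases (hce f').1 ⟨hf', hzf'⟩ with rfl | rfl <;>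
      simp only [χ] <;> split_ifs at hpar <;> simp_all (decide := true)
  have hall : ∀ f ∈ c.edges, ∀ f' ∈ c.edges, χ f = χ f' := by
    have hchain : List.IsChain (· = ·) (c.edges.map χ) := by
      rw [edges, List.map_map, List.isChain_map]
      refine (isChain_dartAdj_darts c).imp_of_mem_imp fun d d' hd hd' hdd' => ?_
      exact hlocal d.snd _ _ (List.mem_map_of_mem hd) (List.mem_map_of_mem hd')
        (Sym2.mem_mk_right _ _) (hdd' ▸ Sym2.mem_mk_left _ _)
    intro f hf f' hf'
    by_contra h
    exact h (hchain.pairwise.forall (List.mem_map_of_mem hf) (List.mem_map_of_mem hf') h)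
  by_cases h : ∀ f ∈ c.edges, f ∈ Q.edges ↔ f ∈ R.edges
  · exact .inl h
  · obtain ⟨f₀, hf₀, hχ₀⟩ := not_forall₂.1 h
    refine .inr fun f hf => ?_
    have := hall f hf f₀ hf₀
    simp only [χ, hχ₀, decide_false, decide_eq_false_iff_not] at this
    tauto

lemma IsCycle.length_eq_or_add_eq {r x y : V} {c : G.Walk r r} (hc : c.IsCycle)
    {Q R : G.Walk x y} (hQ : Q.IsTrail) (hR : R.IsTrail) (hQc : Q.edges ⊆ c.edges)
    (hRc : R.edges ⊆ c.edges) : Q.length = R.length ∨ Q.length + R.length = c.length := by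
  rw [← length_edges Q, ← length_edges R, ← length_edges c]
  rcases hc.mem_edges_iff_or hQ hR hQc hRc with h | h
  · left
    refine ((List.perm_ext_iff_of_nodup hQ.edges_nodup hR.edges_nodup).2 fun f => ?_).length_eq
    exact ⟨fun hf => (h f (hQc hf)).1 hf, fun hf => (h f (hRc hf)).2 hf⟩
  · right
    have hnodup : (Q.edges ++ R.edges).Nodup := List.nodup_append.2
      ⟨hQ.edges_nodup, hR.edges_nodup, by rintro f hf _ hf' rfl; exact (h f (hQc hf)).1 hf hf'⟩
    rw [← List.length_append]
    refine ((List.perm_ext_iff_of_nodup hnodup hc.isTrail.edges_nodup).2 fun f => ?_).length_eq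
    rw [List.mem_append]
    refine ⟨fun hf => hf.elim (hQc ·) (hRc ·), fun hf => ?_⟩
    by_cases hfQ : f ∈ Q.edges
    exacts [.inl hfQ, .inr (not_not.1 (mt (h f hf).2 hfQ))]

lemma support_subset_support_of_edges_subset {x y a b : V} {p : G.Walk x y} {q : G.Walk a b}
    (hp : ¬p.Nil) (h : p.edges ⊆ q.edges) : p.support ⊆ q.support := fun _ hz => by
  obtain ⟨e, he, hze⟩ := (mem_support_iff_exists_mem_edges_of_not_nil hp).1 hz
  exact mem_support_of_mem_edges (h he) hze

lemma IsCycle.card_toFinset_support [DecidableEq V] {r : V} {c : G.Walk r r} (hc : c.IsCycle) :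
    c.support.toFinset.card = c.length := by
  rw [← c.cons_tail_support, List.toFinset_cons,
    Finset.insert_eq_of_mem (List.mem_toFinset.2 (c.end_mem_tail_support hc.not_nil)),
    List.toFinset_card_of_nodup hc.support_nodup, List.length_tail, length_support]
  rfl

lemma IsPath.card_toFinset_support [DecidableEq V] {x y : V} {p : G.Walk x y} (hp : p.IsPath) :
    p.support.toFinset.card = p.length + 1 := by
  rw [List.toFinset_card_of_nodup hp.support_nodup, length_support]

lemma isChordless_of_forall_length_le {x y : V} (W : G.Walk x y)
    (hW : ∀ Q : G.Walk x y, W.length ≤ Q.length) : W.IsChordless := by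
  classical
  induction W with
  | nil =>
    refine isChordless_iff_forall_mem_edges.2 fun a b ha hb hab => ?_
    simp only [support_nil, List.mem_singleton] at ha hb
    subst ha hb
    exact absurd hab G.irrefl
  | @cons x m y h W ih =>
    have hmin : ∀ Q : G.Walk m y, W.length ≤ Q.length := fun Q => by simpa using hW (cons h Q)
    -- an edge from `x` to a later vertex `b` of `W` would shorten the walk unless `b = m`
    have hfirst : ∀ b ∈ W.support, G.Adj x b → b = m := fun b hb hxb => by
      have h1 := hW (cons hxb (W.dropUntil b hb))
      have h2 := congrArg length (W.take_spec hb)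
      simp only [length_cons, length_append] at h1 h2
      exact (eq_of_length_eq_zero (by omega : (W.takeUntil b hb).length = 0)).symm
    have ih := isChordless_iff_forall_mem_edges.1 (ih hmin)
    refine isChordless_iff_forall_mem_edges.2 fun a b ha hb hab => ?_
    rw [support_cons, List.mem_cons] at ha hb
    rw [edges_cons, List.mem_cons]
    rcases ha with rfl | ha <;> rcases hb with rfl | hb
    · exact absurd hab G.irrefl
    · exact .inl (by rw [hfirst b hb hab])
    · exact .inl (by rw [hfirst a ha hab.symm, Sym2.eq_swap])
    · exact .inr (ih ha hb hab)

end SimpleGraph.Walk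

open Walk

variable {G : SimpleGraph V}

lemma IsPathOf.isChordless {r x y : V} {c : G.Walk r r} (hc : IsInducedCycle G c)
    {A : G.Walk x y} (hA : IsPathOf G c A) (hxy : ¬G.Adj x y) : A.IsChordless := by
  refine isChordless_iff_forall_mem_edges.2 fun a b ha hb hab => ?_
  by_cases hnil : A.Nil
  · rw [nil_iff_support_eq.1 hnil, List.mem_singleton] at ha hb
    subst ha hb
    exact absurd hab G.irrefl
  have hsupp := support_subset_support_of_edges_subset hnil hA.2
  have hce := hc.2 a b (hsupp ha) (hsupp hb) hab
  have hinner := fun {z} (hz : z ∈ A.support) (hzx : z ≠ x) (hzy : z ≠ y) =>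
    hc.1.mem_edges_of_mem_support hA.1.isTrail hA.2 hz hzx hzy hce
  by_cases ha' : a = x ∨ a = y
  · by_cases hb' : b = x ∨ b = y
    · exfalso
      rcases ha' with rfl | rfl <;> rcases hb' with rfl | rfl
      exacts [G.irrefl hab, hxy hab, hxy hab.symm, G.irrefl hab]
    · exact hinner hb (not_or.1 hb').1 (not_or.1 hb').2 (Sym2.mem_mk_right a b)
  · exact hinner ha (not_or.1 ha').1 (not_or.1 ha').2 (Sym2.mem_mk_left a b)

lemma cycleDist_le {r x y : V} {c : G.Walk r r} {A : G.Walk x y} (hA : IsPathOf G c A) :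
    cycleDist G c x y ≤ A.length :=
  Nat.sInf_le ⟨A, hA, rfl⟩

lemma exists_isPathOf_length_eq_cycleDist {r x y : V} {c : G.Walk r r}
    (h : cycleDist G c x y ≠ 0) :
    ∃ A : G.Walk x y, IsPathOf G c A ∧ A.length = cycleDist G c x y :=
  Nat.sInf_mem (Nat.nonempty_of_pos_sInf (Nat.pos_of_ne_zero h))

lemma min_le_cycleDist {r x y : V} {c : G.Walk r r} (hc : c.IsCycle) {A : G.Walk x y}
    (hA : IsPathOf G c A) : min A.length (c.length - A.length) ≤ cycleDist G c x y := by
  obtain ⟨Q, hQ, hQlen⟩ : ∃ Q : G.Walk x y, IsPathOf G c Q ∧ Q.length = cycleDist G c x y :=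
    Nat.sInf_mem (s := {n | ∃ Q : G.Walk x y, IsPathOf G c Q ∧ Q.length = n})
      ⟨A.length, A, hA, rfl⟩
  rw [← hQlen]
  rcases hc.length_eq_or_add_eq hQ.1.isTrail hA.1.isTrail hQ.2 hA.2 with h | h <;> omega

lemma ArcPair.cycleDist_eq {r u v : V} {c : G.Walk r r} (hc : c.IsCycle) {C1 C2 : G.Walk u v}
    (h : ArcPair G c C1 C2) (hle : C1.length ≤ C2.length) : cycleDist G c u v = C1.length := by
  have := min_le_cycleDist hc h.1
  have := h.2.2.1
  exact le_antisymm (cycleDist_le h.1) (by omega)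

lemma IsShortestPath.length_eq_dist {u v : V} {P : G.Walk u v} (h : IsShortestPath G P) :
    P.length = G.dist u v := by
  obtain ⟨Q, hQ⟩ := P.reachable.exists_walk_length_eq_dist
  exact le_antisymm (hQ ▸ h.2 Q) (dist_le P)

lemma CGood.exists_length_le {r x y : V} {c : G.Walk r r} (hC : IsShortestEvenHole G c)
    {W : G.Walk x y} (hW : W.IsPath) (hxy : x ≠ y) (hg : CGood G c W) :
    ∃ Q : G.Walk x y, IsPathOf G c Q ∧ c.length ≤ W.length + Q.length := by
  classical
  obtain ⟨Q, hQ, r', w, hw, hsupp⟩ := hg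
  refine ⟨Q, hQ, ?_⟩
  have hunion : w.support.toFinset = W.support.toFinset ∪ Q.support.toFinset := by
    ext z
    simpa [suppSet] using congrArg (z ∈ ·) hsupp
  have hinter : 1 < (W.support.toFinset ∩ Q.support.toFinset).card :=
    Finset.one_lt_card.2 ⟨x, by simp, y, by simp, hxy⟩
  have hcard := Finset.card_union_add_card_inter W.support.toFinset Q.support.toFinset
  rw [← hunion, hw.1.1.1.1.card_toFinset_support, hW.card_toFinset_support,
    hQ.1.card_toFinset_support] at hcard
  have := hC.2 r' w hw.1
  omega

lemma isHoleOn_union_of_isChordless {u v : V} {W A : G.Walk u v} (hW : W.IsPath)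
    (hA : A.IsPath) (hWc : W.IsChordless) (hAc : A.IsChordless)
    (hsep : ∀ a ∈ W.support, ∀ b ∈ A.support, a ≠ u → a ≠ v → b ≠ u → b ≠ v →
      ¬(a = b ∨ G.Adj a b))
    (hlen : 4 ≤ W.length + A.length) : IsHoleOn G (suppSet W ∪ suppSet A) := by
  have hmem : ∀ z, z ∈ (W.append A.reverse).support ↔ z ∈ W.support ∨ z ∈ A.support := by
    simp [mem_support_append_iff]
  have hcyc : (W.append A.reverse).IsCycle := by
    refine hW.isCycle_append hA.reverse (List.disjoint_left.2 fun z hzW hzA => ?_)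
      (by simp only [length_reverse]; omega)
    have hWu := hW.support_nodup
    have hAv := hA.reverse.support_nodup
    rw [← cons_tail_support, List.nodup_cons] at hWu hAv
    have hzA' : z ∈ A.support := by
      simpa using List.mem_of_mem_tail hzA
    exact hsep z (List.mem_of_mem_tail hzW) z hzA' (by rintro rfl; exact hWu.1 hzW)
      (by rintro rfl; exact hAv.1 hzA) (by rintro rfl; exact hWu.1 hzW)
      (by rintro rfl; exact hAv.1 hzA) (.inl rfl)
  refine ⟨u, W.append A.reverse, ⟨⟨hcyc, fun a b ha hb hab => ?_⟩, by simp; omega⟩, ?_⟩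
  · rw [hmem] at ha hb
    rw [edges_append, edges_reverse, List.mem_append, List.mem_reverse]
    by_cases hWab : a ∈ W.support ∧ b ∈ W.support
    · exact .inl (hWc.mem_edges hWab.1 hWab.2 hab)
    by_cases hAab : a ∈ A.support ∧ b ∈ A.support
    · exact .inr (hAc.mem_edges hAab.1 hAab.2 hab)
    -- one end lies on `W` only, the other on `A` only, so both are inner vertices
    have hWuv : u ∈ W.support ∧ v ∈ W.support := ⟨W.start_mem_support, W.end_mem_support⟩
    have hAuv : u ∈ A.support ∧ v ∈ A.support := ⟨A.start_mem_support, A.end_mem_support⟩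
    exfalso
    rcases ha with ha | ha <;> rcases hb with hb | hb
    · exact hWab ⟨ha, hb⟩
    · refine hsep a ha b hb ?_ ?_ ?_ ?_ (.inr hab) <;> rintro rfl <;> tauto
    · refine hsep b hb a ha ?_ ?_ ?_ ?_ (.inr hab.symm) <;> rintro rfl <;> tauto
    · exact hAab ⟨ha, hb⟩
  · ext z
    simp [suppSet, hmem]

lemma dist_add_dist_le_of_mem_support {u v x y : V} (W : G.Walk u v) (hx : x ∈ W.support)
    (hxu : x ≠ u) (hxv : x ≠ v) (hxy : x = y ∨ G.Adj x y) :
    G.dist u y + G.dist v y ≤ W.length + 2 ∧ G.dist u y ≤ W.length ∧ G.dist v y ≤ W.length := by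
  classical
  obtain ⟨E, hE⟩ : ∃ E : G.Walk x y, E.length ≤ 1 := by
    rcases hxy with rfl | h
    exacts [⟨nil, by simp⟩, ⟨h.toWalk, by simp⟩]
  have hsplit := congrArg length (W.take_spec hx)
  have h1 := dist_le ((W.takeUntil x hx).append E)
  have h2 := dist_le ((W.dropUntil x hx).reverse.append E)
  have h3 : (W.takeUntil x hx).length ≠ 0 := fun h => hxu (eq_of_length_eq_zero h).symm
  have h4 : (W.dropUntil x hx).length ≠ 0 := fun h => hxv (eq_of_length_eq_zero h)
  simp only [length_append, length_reverse] at hsplit h1 h2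
  omega

section WorstShortcut

variable {r u v : V} {c : G.Walk r r} {P : G.Walk u v}

lemma dist_eq_or_of_worstCShortcut (hC : IsShortestEvenHole G c) (hP : WorstCShortcut G c P)
    {x y : V} {A : G.Walk x y} (hxy : x ≠ y) (hA : IsPathOf G c A)
    (hAP : A.length + P.length < c.length) (hdist : G.dist x y ≤ P.length) :
    G.dist x y = A.length ∨
      (G.dist x y = P.length ∧ min A.length (c.length - A.length) ≤ cycleDist G c u v) := by
  have hcyc : IsInducedCycle G c := hC.1.1.1
  obtain ⟨-, ⟨hk2, -, hkn⟩, -, hworst⟩ := hP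
  have hsupp := support_subset_support_of_edges_subset (not_nil_of_ne hxy) hA.2
  have hxc := hsupp A.start_mem_support
  have hyc := hsupp A.end_mem_support
  have hAdist := dist_le A
  have hcd := min_le_cycleDist hcyc.1 hA
  by_cases hadj : G.Adj x y
  · have hone : IsPathOf G c hadj.toWalk :=
      ⟨by simp [hadj.ne], by simpa using hcyc.2 x y hxc hyc hadj⟩
    rcases hcyc.1.length_eq_or_add_eq hone.1.isTrail hA.1.isTrail hone.2 hA.2 with h | h <;>
      simp only [Adj.length_toWalk] at h
    · exact .inl (by rw [dist_eq_one_iff_adj.2 hadj, h])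
    · omega
  obtain ⟨W, hW, hWlen⟩ := A.reachable.exists_path_of_dist
  have hW2 : 2 ≤ W.length := hWlen ▸ A.reachable.one_lt_dist_of_ne_of_not_adj hxy hadj
  have hsetup : ShortcutSetup G c W := ⟨hW, hxy, hadj, hxc, hyc⟩
  have hshort : CShortcut G c W := ⟨hW2, by omega, by omega⟩
  by_cases hgood : CGood G c W
  · obtain ⟨Q, hQ, hQlen⟩ := hgood.exists_length_le hC hW hxy
    rcases hcyc.1.length_eq_or_add_eq hQ.1.isTrail hA.1.isTrail hQ.2 hA.2 with h | h <;> omega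
  · rcases hworst x y W hsetup hshort hgood with h | ⟨h, hd⟩
    · omega
    · exact .inr ⟨by omega, hcd.trans hd⟩

lemma dist_eq_length_of_worstCShortcut (hC : IsShortestEvenHole G c)
    (hP : WorstCShortcut G c P) (hshallow : cycleDist G c u v - 1 ≤ P.length) :
    G.dist u v = P.length := by
  have huv : u ≠ v := hP.1.2.1
  obtain ⟨hk2, hkd, hkn⟩ := hP.2.1
  obtain ⟨A, hA, hAlen⟩ := exists_isPathOf_length_eq_cycleDist (by omega : cycleDist G c u v ≠ 0)
  have := dist_le P
  rcases dist_eq_or_of_worstCShortcut hC hP huv hA (by omega) this with h | h <;> omega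

lemma not_eq_or_adj_of_worstCShortcut (hC : IsShortestEvenHole G c) (hP : WorstCShortcut G c P)
    (hshallow : cycleDist G c u v - 1 ≤ P.length) {C2 : G.Walk u v} (hC2 : IsPathOf G c C2)
    (hlen : cycleDist G c u v + C2.length = c.length) {W : G.Walk u v} (hW : W.length = P.length)
    {x y : V} (hx : x ∈ W.support) (hxu : x ≠ u) (hxv : x ≠ v) (hy : y ∈ C2.support)
    (hyu : y ≠ u) (hyv : y ≠ v) : ¬(x = y ∨ G.Adj x y) := by
  classical
  intro hxy
  obtain ⟨hk2, hkd, hkn⟩ := hP.2.1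
  obtain ⟨m, hm⟩ := hC.1.2
  obtain ⟨hst, hs, ht⟩ := dist_add_dist_le_of_mem_support W hx hxu hxv hxy
  have hsplit := congrArg length (C2.take_spec hy)
  simp only [length_append] at hsplit
  have hb : (C2.takeUntil y hy).length ≠ 0 := fun h => hyu (eq_of_length_eq_zero h).symm
  have hb' : (C2.dropUntil y hy).length ≠ 0 := fun h => hyv (eq_of_length_eq_zero h)
  have hu := dist_eq_or_of_worstCShortcut hC hP hyu.symm
    ⟨hC2.1.takeUntil hy, fun e he => hC2.2 e (C2.edges_takeUntil_subset_edges hy he)⟩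
    (by omega) (by omega)
  have hrev := length_reverse (C2.dropUntil y hy)
  have hv := dist_eq_or_of_worstCShortcut hC hP hyv.symm
    ⟨(hC2.1.dropUntil hy).reverse,
      fun e he => hC2.2 e (C2.edges_dropUntil_subset_edges hy (by simpa using he))⟩
    (by omega) (by omega)
  -- `‖C2‖ ≥ 3k`, but each alternative for `hu` and `hv` bounds `‖C2‖` by `2k + 2`;
  -- the boundary case `k = 2` is excluded because `‖C‖` is even.
  omega

end WorstShortcut

theorem stmt7 (G : SimpleGraph V) {r u v : V} (c : G.Walk r r)
    (hC : IsShortestEvenHole G c) (P : G.Walk u v)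
    (hworst : WorstCShortcut G c P) (hshallow : CShallow G c P)
    (C1 C2 : G.Walk u v) (harc : ArcPair G c C1 C2) (hle : C1.length ≤ C2.length) :
    ∀ Puv : G.Walk u v, IsShortestPath G Puv →
      Puv.length = P.length ∧ IsHoleOn G (suppSet Puv ∪ suppSet C2) := by
  intro Puv hPuv
  have hind : IsInducedCycle G c := hC.1.1.1
  have hcd : cycleDist G c u v = C1.length := harc.cycleDist_eq hind.1 hle
  obtain ⟨-, hC2, hsum, -⟩ := harc
  have hk : Puv.length = P.length :=
    hPuv.length_eq_dist.trans (dist_eq_length_of_worstCShortcut hC hworst hshallow.1)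
  obtain ⟨hk2, -, hkn⟩ := hworst.2.1
  refine ⟨hk, isHoleOn_union_of_isChordless hPuv.1 hC2.1
    (isChordless_of_forall_length_le Puv hPuv.2) (hC2.isChordless hind hworst.1.2.2.1)
    (fun x hx y hy hxu hxv hyu hyv => ?_) (by omega)⟩
  exact not_eq_or_adj_of_worstCShortcut hC hworst hshallow.1 hC2 (by omega) hk hx hxu hxv hy
    hyu hyv
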